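/- arXiv:1802.08700 — 2 statements merged into one kernel-verified Lean document; each statement's English description precedes it below -/
import Mathlib

section
/- For all natural numbers x₁, x₂, …, xₙ, the Sprague–Grundy value of the Auxiliary Nim game satisfies x₁ + (x₂ ⊕ x₃ ⊕ ⋯ ⊕ xₙ) ≤ N(x₁, x₂, …, xₙ) ≤ x₁ + x₂ + ⋯ + xₙ, where ⊕ denotes bitwise XOR. -/
lemma sum_update_lt {n : ℕ} (x : Fin n → ℕ) (i : Fin n) (v : ℕ) (h : v < x i) :
    (∑ j, Function.update x i v j) < ∑ j, x j := by
  apply Finset.sum_lt_sum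
  · intro j _
    rcases eq_or_ne j i with rfl | hj
    · simpa using h.le
    · simp [Function.update_of_ne hj]
  · exact ⟨i, Finset.mem_univ i, by simpa using h⟩

/-- Sprague–Grundy value of the Auxiliary Nim game
`(*a) ⊞ ((*x 0) ⊕ ⋯ ⊕ (*x (n-1)))`, where `x : Fin n → ℕ` lists the piles
`x₂, …, xₙ` and `a` is the auxiliary pile `x₁`.  It is the mex of the
Sprague–Grundy values of the one-move successors: strictly decrease `a`,
or strictly decrease exactly one of the piles `x i`, or do both. -/
noncomputable def NAux {n : ℕ} (a : ℕ) (x : Fin n → ℕ) : ℕ :=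
  sInf {m : ℕ |
    (∀ a', a' < a → NAux a' x ≠ m) ∧
    (∀ (i : Fin n) (v : ℕ), v < x i → NAux a (Function.update x i v) ≠ m) ∧
    (∀ a', a' < a → ∀ (i : Fin n) (v : ℕ), v < x i →
      NAux a' (Function.update x i v) ≠ m)}
termination_by a + ∑ j, x j
decreasing_by
  · exact Nat.add_lt_add_right ‹_› _
  · exact Nat.add_lt_add_left (sum_update_lt x i v ‹_›) a
  · exact Nat.add_lt_add ‹_› (sum_update_lt x i v ‹_›)

/-- The bitwise XOR `x 0 ^^^ x 1 ^^^ ⋯ ^^^ x (n-1)` of the piles. -/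
def xorSum {n : ℕ} (x : Fin n → ℕ) : ℕ := (List.ofFn x).foldr (· ^^^ ·) 0

/-
The upper bound holds because a position's value is the least natural number missing from the
values of its options, each of which is smaller than the total pile size by induction.
For the lower bound, every option of `(a, x)` is also an option of `(a + 1, x)`, and so is
`(a, x)` itself; hence `N(a, x)` is strictly increasing in `a`. At `a = 0` the game is ordinary
Nim, whose value is the XOR of the piles (Bouton), so `N(a, x) ≥ a + N(0, x) = a + ⊕ x`.
-/

open Function

theorem Nat.sInf_compl_eq_of_forall_lt_mem {S : Set ℕ} {m : ℕ} (hm : m ∉ S)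
    (hlt : ∀ k < m, k ∈ S) : sInf Sᶜ = m :=
  le_antisymm (Nat.sInf_le hm) (le_csInf ⟨m, hm⟩ fun _ hk => not_lt.1 fun h => hk (hlt _ h))

theorem Nat.sInf_compl_lt_sInf_compl {S T : Set ℕ} (hST : S ⊆ T) (hS : sInf Sᶜ ∈ T)
    (hT : Tᶜ.Nonempty) : sInf Sᶜ < sInf Tᶜ :=
  lt_of_le_of_ne (csInf_le_csInf (OrderBot.bddBelow _) hT (Set.compl_subset_compl.2 hST))
    fun h => Nat.sInf_mem hT (h ▸ hS)

section Xor

variable {n : ℕ}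

theorem xorSum_cons (a : ℕ) (y : Fin n → ℕ) :
    xorSum (Fin.cons a y : Fin (n + 1) → ℕ) = a ^^^ xorSum y := by
  simp [xorSum, List.ofFn_succ]

theorem xorSum_update (x : Fin n → ℕ) (i : Fin n) (v : ℕ) :
    xorSum (update x i v) = xorSum x ^^^ x i ^^^ v := by
  induction x using Fin.consInduction with
  | elim0 => exact i.elim0
  | cons x0 y ih =>
    rcases Fin.eq_zero_or_eq_succ i with rfl | ⟨j, rfl⟩
    · simp only [Fin.update_cons_zero, xorSum_cons, Fin.cons_zero]
      rw [Nat.xor_comm x0, xor_cancel_right, Nat.xor_comm]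
    · rw [← Fin.cons_update, xorSum_cons, ih j, xorSum_cons, Fin.cons_succ]
      simp only [Nat.xor_assoc]

theorem xorSum_update_ne (x : Fin n → ℕ) {i : Fin n} {v : ℕ} (hv : v ≠ x i) :
    xorSum (update x i v) ≠ xorSum x := by
  rw [xorSum_update, Nat.xor_assoc, Ne, xor_left_eq_self_iff, xor_eq_zero_iff]
  exact hv.symm

theorem exists_xorSum_update_eq_of_lt (x : Fin n → ℕ) {t : ℕ} (ht : t < xorSum x) :
    ∃ i, ∃ v < x i, xorSum (update x i v) = t := by
  induction x using Fin.consInduction generalizing t with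
  | elim0 => simp [xorSum] at ht
  | cons x0 y ih =>
    rw [xorSum_cons] at ht
    rcases Nat.lt_xor_cases ht with h0 | hy
    · refine ⟨0, t ^^^ xorSum y, by simpa using h0, ?_⟩
      rw [Fin.update_cons_zero, xorSum_cons, xor_cancel_right]
    · obtain ⟨j, v, hv, hj⟩ := ih hy
      refine ⟨j.succ, v, by simpa using hv, ?_⟩
      rw [← Fin.cons_update, xorSum_cons, hj, Nat.xor_comm t, ← Nat.xor_assoc, Nat.xor_self,
        Nat.zero_xor]

end Xor

section AuxNim

variable {n : ℕ}

def auxOptionValues (a : ℕ) (x : Fin n → ℕ) : Set ℕ :=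
  {m | (∃ a' < a, NAux a' x = m) ∨ (∃ i, ∃ v < x i, NAux a (update x i v) = m) ∨
    ∃ a' < a, ∃ i, ∃ v < x i, NAux a' (update x i v) = m}

theorem NAux_eq_sInf_compl (a : ℕ) (x : Fin n → ℕ) :
    NAux a x = sInf (auxOptionValues a x)ᶜ := by
  rw [NAux]
  congr 1
  ext m
  simp [auxOptionValues]

theorem add_sum_notMem_auxOptionValues (a : ℕ) (x : Fin n → ℕ) :
    a + ∑ j, x j ∉ auxOptionValues a x := by
  have value_lt (a' : ℕ) (x' : Fin n → ℕ) (h : a' + ∑ j, x' j < a + ∑ j, x j) :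
      NAux a' x' < a + ∑ j, x j := by
    rw [NAux_eq_sInf_compl]
    exact (Nat.sInf_le (add_sum_notMem_auxOptionValues a' x')).trans_lt h
  rintro (⟨a', ha', h⟩ | ⟨i, v, hv, h⟩ | ⟨a', ha', i, v, hv, h⟩) <;>
    refine (value_lt _ _ ?_).ne h
  · omega
  · have := sum_update_lt x i v hv
    omega
  · have := sum_update_lt x i v hv
    omega
termination_by a + ∑ j, x j

theorem NAux_le_add_sum (a : ℕ) (x : Fin n → ℕ) : NAux a x ≤ a + ∑ j, x j := by
  rw [NAux_eq_sInf_compl]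
  exact Nat.sInf_le (add_sum_notMem_auxOptionValues a x)

theorem NAux_zero (x : Fin n → ℕ) : NAux 0 x = xorSum x := by
  have hopt : auxOptionValues 0 x = {m | ∃ i, ∃ v < x i, xorSum (update x i v) = m} := by
    ext m
    simp only [auxOptionValues, Nat.not_lt_zero, false_and, exists_false, false_or, or_false]
    refine exists_congr fun i => exists_congr fun v => and_congr_right fun hv => ?_
    rw [NAux_zero (update x i v)]
  rw [NAux_eq_sInf_compl, hopt]
  refine Nat.sInf_compl_eq_of_forall_lt_mem ?_ fun _ hk => exists_xorSum_update_eq_of_lt x hk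
  rintro ⟨i, v, hv, h⟩
  exact xorSum_update_ne x hv.ne h
termination_by ∑ j, x j
decreasing_by
  exact sum_update_lt x _ _ ‹_›

theorem NAux_lt_NAux_succ (a : ℕ) (x : Fin n → ℕ) : NAux a x < NAux (a + 1) x := by
  have hsub : auxOptionValues a x ⊆ auxOptionValues (a + 1) x := by
    rintro m (⟨a', ha', h⟩ | ⟨i, v, hv, h⟩ | ⟨a', ha', i, v, hv, h⟩)
    · exact Or.inl ⟨a', ha'.trans a.lt_succ_self, h⟩
    · exact Or.inr (Or.inr ⟨a, a.lt_succ_self, i, v, hv, h⟩)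
    · exact Or.inr (Or.inr ⟨a', ha'.trans a.lt_succ_self, i, v, hv, h⟩)
  have hself : NAux a x ∈ auxOptionValues (a + 1) x := Or.inl ⟨a, a.lt_succ_self, rfl⟩
  rw [NAux_eq_sInf_compl a x] at hself
  rw [NAux_eq_sInf_compl a x, NAux_eq_sInf_compl (a + 1) x]
  exact Nat.sInf_compl_lt_sInf_compl hsub hself ⟨_, add_sum_notMem_auxOptionValues (a + 1) x⟩

theorem strictMono_NAux (x : Fin n → ℕ) : StrictMono fun a => NAux a x :=
  strictMono_nat_of_lt_succ fun a => NAux_lt_NAux_succ a x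

end AuxNim

theorem auxNim_bounds_general {n : ℕ} (x₁ : ℕ) (x : Fin n → ℕ) :
    x₁ + xorSum x ≤ NAux x₁ x ∧ NAux x₁ x ≤ x₁ + ∑ i, x i := by
  refine ⟨?_, NAux_le_add_sum x₁ x⟩
  simpa [NAux_zero] using (strictMono_NAux x).add_le_nat x₁ 0

/-- Bounds on the Sprague–Grundy value of Auxiliary Nim:
`x₁ + (x₂ ⊕ ⋯ ⊕ xₙ) ≤ N(x₁, x₂, …, xₙ) ≤ x₁ + x₂ + ⋯ + xₙ`. -/
theorem auxNim_bounds {n : ℕ} (hn : 1 ≤ n) (x₁ : ℕ) (x : Fin n → ℕ) :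
    x₁ + xorSum x ≤ NAux x₁ x ∧ NAux x₁ x ≤ x₁ + ∑ i, x i :=
  auxNim_bounds_general x₁ x
end

section
/- For all natural numbers a ≥ 1 and b, c: N(a, b, c) = a if and only if b = c and 2^(⌊log₂ a⌋ + 1) divides b; equivalently, b = c = k · 2^(⌊log₂ a⌋ + 1) for some natural number k. -/
/-- Sprague–Grundy value of the Auxiliary Nim game `(*a) ⊞ ((*b) ⊕ (*c))`:
the mex of the Sprague–Grundy values of the one-move successors, which are
`(a',b,c)` with `a' < a`, `(a,b',c)` with `b' < b`, `(a,b,c')` with `c' < c`,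
`(a',b',c)` with `a' < a, b' < b`, and `(a',b,c')` with `a' < a, c' < c`. -/
noncomputable def N3 (a b c : ℕ) : ℕ :=
  sInf {m : ℕ |
    (∀ a', a' < a → N3 a' b c ≠ m) ∧
    (∀ b', b' < b → N3 a b' c ≠ m) ∧
    (∀ c', c' < c → N3 a b c' ≠ m) ∧
    (∀ a', a' < a → ∀ b', b' < b → N3 a' b' c ≠ m) ∧
    (∀ a', a' < a → ∀ c', c' < c → N3 a' b c' ≠ m)}
termination_by a + b + c
decreasing_by all_goals omega


/-!
Shifting both Nim heaps by a common multiple of `2^u` does not change the value of a small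
position: if `a + r + s < 2^u` then `N(a, 2^u Q + r, 2^u Q + s) = N(a, r, s)`. Indeed the moves
of `(a, r, s)` lift to moves of the shifted position with the same values, while a move taking
`b` or `c` below `2^u Q` separates the quotients of the heaps by `2^u`, so its value is at least
`b xor c ≥ 2^u > a + r + s ≥ N(a, r, s)`. For `u = ⌊log₂ a⌋ + 1` and `r = s = 0` this gives
`N(a, b, b) = N(a, 0, 0) = a` whenever `2^u ∣ b`.

Conversely let `b ≤ c` with `b ≠ c` or `2^u ∤ b`; then some move reaches value `a`: `(a, b, b)`
if `2^u ∣ b`; otherwise, with `r = b mod 2^u`, the move `(a - r, b, b - r)` of value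
`N(a - r, r, 0) = a` if `r ≤ a`, and `(0, b, a xor b)` if `r > a`, since then `b` carries the
leading bit of `a`.
-/

namespace Nat

theorem two_pow_le_xor_of_lt_of_le {x y u Q : ℕ} (hx : x < 2 ^ u * Q) (hy : 2 ^ u * Q ≤ y) :
    2 ^ u ≤ x ^^^ y := by
  by_contra! h
  have hdiv : (x ^^^ y) / 2 ^ u = 0 := div_eq_of_lt h
  rw [xor_div_two_pow, xor_eq_zero_iff] at hdiv
  have hx' : x / 2 ^ u < Q := Nat.div_lt_of_lt_mul hx
  have hy' : Q ≤ y / 2 ^ u := (le_div_iff_mul_le (Nat.two_pow_pos u)).2 (by rwa [mul_comm])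
  omega

theorem xor_lt_of_testBit_log {a b : ℕ} (ha : a ≠ 0) (hb : b.testBit (Nat.log 2 a)) :
    a ^^^ b < b := by
  have ha_top : a.testBit (Nat.log 2 a) := testBit_of_two_pow_le_and_two_pow_add_one_gt
    (pow_log_le_self 2 ha) (lt_pow_succ_log_self one_lt_two a)
  refine lt_of_testBit (Nat.log 2 a) (by rw [testBit_xor, ha_top, hb]; rfl) hb
    fun j hj => ?_
  have : a.testBit j = false := testBit_lt_two_pow
    ((lt_pow_succ_log_self one_lt_two a).trans_le (Nat.pow_le_pow_right two_pos hj))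
  rw [testBit_xor, this, Bool.false_xor]

end Nat

-- The five kinds of moves are exactly the positions `≠ (a, b, c)`, componentwise below it,
-- that keep `b` or `c`.
def optionValues (a b c : ℕ) : Set ℕ :=
  {m | ∃ a' ≤ a, ∃ b' ≤ b, ∃ c' ≤ c, (b' = b ∨ c' = c) ∧ a' + b' + c' < a + b + c ∧
    N3 a' b' c' = m}

theorem N3_eq_sInf_compl (a b c : ℕ) : N3 a b c = sInf (optionValues a b c)ᶜ := by
  rw [N3]
  congr 1
  ext m
  simp only [optionValues, Set.mem_ofPred_eq, Set.mem_compl_iff, not_exists, not_and]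
  constructor
  · rintro ⟨h₁, h₂, h₃, h₄, h₅⟩ a' ha b' hb c' hc hbc hlt
    rcases ha.lt_or_eq with ha | rfl <;> rcases hb.lt_or_eq with hb | rfl <;>
      rcases hc.lt_or_eq with hc | rfl <;> grind
  · intro h
    exact ⟨fun a' ha => h a' ha.le b le_rfl c le_rfl (.inl rfl) (by omega),
      fun b' hb => h a le_rfl b' hb.le c le_rfl (.inr rfl) (by omega),
      fun c' hc => h a le_rfl b le_rfl c' hc.le (.inl rfl) (by omega),
      fun a' ha b' hb => h a' ha.le b' hb.le c le_rfl (.inr rfl) (by omega),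
      fun a' ha c' hc => h a' ha.le b le_rfl c' hc.le (.inl rfl) (by omega)⟩

theorem add_notMem_optionValues (a b c : ℕ) : a + b + c ∉ optionValues a b c := by
  rintro ⟨a', -, b', -, c', -, -, hlt, hm⟩
  have : N3 a' b' c' ≤ a' + b' + c' := by
    rw [N3_eq_sInf_compl]
    exact Nat.sInf_le (add_notMem_optionValues a' b' c')
  omega
termination_by a + b + c

theorem N3_le_add (a b c : ℕ) : N3 a b c ≤ a + b + c := by
  rw [N3_eq_sInf_compl]
  exact Nat.sInf_le (add_notMem_optionValues a b c)

theorem N3_notMem_optionValues (a b c : ℕ) : N3 a b c ∉ optionValues a b c := by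
  rw [N3_eq_sInf_compl]
  exact Nat.sInf_mem (s := (optionValues a b c)ᶜ) ⟨_, add_notMem_optionValues a b c⟩

theorem mem_optionValues_of_lt_N3 {a b c m : ℕ} (hm : m < N3 a b c) : m ∈ optionValues a b c := by
  rw [N3_eq_sInf_compl] at hm
  simpa using Nat.notMem_of_lt_sInf hm

theorem N3_eq_of_notMem {a b c v : ℕ} (hv : v ∉ optionValues a b c)
    (hlt : ∀ m < v, m ∈ optionValues a b c) : N3 a b c = v := by
  refine le_antisymm (N3_eq_sInf_compl a b c ▸ Nat.sInf_le hv) (not_lt.1 fun h => ?_)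
  exact N3_notMem_optionValues a b c (hlt _ h)

theorem N3_comm (a b c : ℕ) : N3 a b c = N3 a c b := by
  rw [N3_eq_sInf_compl, N3_eq_sInf_compl]
  congr 2
  ext m
  constructor <;> rintro ⟨a', ha, b', hb, c', hc, hbc, hlt, rfl⟩ <;>
    exact ⟨a', ha, c', hc, b', hb, hbc.symm, by omega, N3_comm a' c' b'⟩
termination_by a + b + c

theorem N3_zero_left (b c : ℕ) : N3 0 b c = b ^^^ c := by
  apply N3_eq_of_notMem
  · rintro ⟨a', ha', b', hb', c', hc', hbc, hlt, hm⟩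
    obtain rfl : a' = 0 := by omega
    rw [N3_zero_left] at hm
    rcases hbc with rfl | rfl
    · exact absurd (Nat.xor_right_inj.mp hm) (by omega)
    · exact absurd (Nat.xor_left_inj.mp hm) (by omega)
  · intro m hm
    rcases Nat.lt_xor_cases hm with h | h
    · exact ⟨0, le_rfl, m ^^^ c, h.le, c, le_rfl, .inr rfl, by omega,
        by rw [N3_zero_left, xor_cancel_right]⟩
    · exact ⟨0, le_rfl, b, le_rfl, m ^^^ b, h.le, .inl rfl, by omega,
        by rw [N3_zero_left, Nat.xor_comm m, xor_cancel_left]⟩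
termination_by b + c

theorem N3_zero_right (a b : ℕ) : N3 a b 0 = a + b := by
  apply N3_eq_of_notMem
  · rintro ⟨a', ha', b', hb', c', hc', -, hlt, hm⟩
    obtain rfl : c' = 0 := by omega
    rw [N3_zero_right] at hm
    omega
  · intro m hm
    rcases le_or_gt a m with h | h
    · exact ⟨a, le_rfl, m - a, by omega, 0, le_rfl, .inr rfl, by omega,
        by rw [N3_zero_right]; omega⟩
    · exact ⟨m, h.le, 0, by omega, 0, le_rfl, .inr rfl, by omega, by rw [N3_zero_right]; omega⟩
termination_by a + b

theorem xor_le_N3 (a b c : ℕ) : b ^^^ c ≤ N3 a b c := by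
  refine not_lt.1 fun h => N3_notMem_optionValues a b c ?_
  rcases Nat.lt_xor_cases h with h | h
  · exact ⟨0, a.zero_le, _, h.le, c, le_rfl, .inr rfl, by omega,
      by rw [N3_zero_left, xor_cancel_right]⟩
  · exact ⟨0, a.zero_le, b, le_rfl, _, h.le, .inl rfl, by omega,
      by rw [N3_zero_left, Nat.xor_comm (N3 a b c), xor_cancel_left]⟩

theorem N3_two_pow_mul_add (u Q a r s : ℕ) (h : a + r + s < 2 ^ u) :
    N3 a (2 ^ u * Q + r) (2 ^ u * Q + s) = N3 a r s := by
  apply N3_eq_of_notMem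
  · rintro ⟨a', ha', b', hb', c', hc', hbc, hlt, hm⟩
    have hvalue := N3_le_add a r s
    by_cases hblock : 2 ^ u * Q ≤ b' ∧ 2 ^ u * Q ≤ c'
    · obtain ⟨r', rfl⟩ := Nat.exists_eq_add_of_le hblock.1
      obtain ⟨s', rfl⟩ := Nat.exists_eq_add_of_le hblock.2
      rw [N3_two_pow_mul_add u Q a' r' s' (by omega)] at hm
      exact N3_notMem_optionValues a r s
        ⟨a', ha', r', by omega, s', by omega, by omega, by omega, hm⟩
    · have : 2 ^ u ≤ N3 a' b' c' := by
        refine le_trans ?_ (xor_le_N3 a' b' c')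
        rcases hbc with rfl | rfl
        · rw [Nat.xor_comm]
          exact Nat.two_pow_le_xor_of_lt_of_le (Q := Q) (by omega) (by omega)
        · exact Nat.two_pow_le_xor_of_lt_of_le (Q := Q) (by omega) (by omega)
      omega
  · intro m hm
    obtain ⟨a', ha', r', hr', s', hs', hrs, hlt, rfl⟩ := mem_optionValues_of_lt_N3 hm
    exact ⟨a', ha', _, by omega, _, by omega, by omega, by omega,
      N3_two_pow_mul_add u Q a' r' s' (by omega)⟩
termination_by a + r + s

theorem N3_self_eq_of_dvd {a b : ℕ} (hb : 2 ^ (Nat.log 2 a + 1) ∣ b) : N3 a b b = a := by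
  obtain ⟨Q, rfl⟩ := hb
  simpa [N3_zero_right] using
    N3_two_pow_mul_add _ Q a 0 0 (by simpa using Nat.lt_pow_succ_log_self one_lt_two a)

theorem self_mem_optionValues {a b c : ℕ} (ha : a ≠ 0) (hbc : b ≤ c)
    (h : ¬(b = c ∧ 2 ^ (Nat.log 2 a + 1) ∣ b)) : a ∈ optionValues a b c := by
  set P := 2 ^ (Nat.log 2 a + 1)
  have haP : a < P := Nat.lt_pow_succ_log_self one_lt_two a
  by_cases hdvd : P ∣ b
  · have hlt : b < c := hbc.lt_of_ne fun hbc => h ⟨hbc, hdvd⟩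
    exact ⟨a, le_rfl, b, le_rfl, b, hbc, .inl rfl, by omega, N3_self_eq_of_dvd hdvd⟩
  set r := b % P
  have hr : r ≠ 0 := fun h => hdvd (Nat.dvd_of_mod_eq_zero h)
  have hb : P * (b / P) + r = b := Nat.div_add_mod b P
  by_cases hra : r ≤ a
  · refine ⟨a - r, by omega, b, le_rfl, b - r, by omega, .inl rfl, by omega, ?_⟩
    have := N3_two_pow_mul_add (Nat.log 2 a + 1) (b / P) (a - r) r 0 (by omega)
    rwa [hb, add_zero, show P * (b / P) = b - r by omega, N3_zero_right,
      Nat.sub_add_cancel hra] at this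
  · have hbit : b.testBit (Nat.log 2 a) := by
      have : r.testBit (Nat.log 2 a) := Nat.testBit_of_two_pow_le_and_two_pow_add_one_gt
        ((Nat.pow_log_le_self 2 ha).trans (by omega)) (Nat.mod_lt b (Nat.two_pow_pos _))
      simpa [r, P, Nat.testBit_mod_two_pow] using this
    have := Nat.xor_lt_of_testBit_log ha hbit
    exact ⟨0, by omega, b, le_rfl, a ^^^ b, by omega, .inl rfl, by omega,
      by rw [N3_zero_left, Nat.xor_comm a, xor_cancel_left]⟩

/-- `N(a,b,c) = a` iff `b = c` and `2 ^ (⌊log₂ a⌋ + 1)` divides `b`;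
equivalently `b = c = k * 2 ^ (⌊log₂ a⌋ + 1)` for some `k`. -/
theorem N3_eq_aux_iff (a b c : ℕ) (ha : 1 ≤ a) :
    N3 a b c = a ↔ (b = c ∧ 2 ^ (Nat.log 2 a + 1) ∣ b) := by
  have ha₀ : a ≠ 0 := Nat.pos_iff_ne_zero.1 ha
  refine ⟨fun h => ?_, fun ⟨hbc, hb⟩ => hbc ▸ N3_self_eq_of_dvd hb⟩
  by_contra hbad
  rcases le_total b c with hle | hle
  · apply N3_notMem_optionValues a b c
    rw [h]
    exact self_mem_optionValues ha₀ hle hbad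
  · apply N3_notMem_optionValues a c b
    rw [← N3_comm, h]
    exact self_mem_optionValues ha₀ hle fun ⟨hcb, hc⟩ => hbad ⟨hcb.symm, hcb ▸ hc⟩
end
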